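/- arXiv:2103.11166 — 2 statements merged into one kernel-verified Lean document; each statement's English description precedes it below -/
import Mathlib

section
/- Let a > 0 and b ≥ 0 be real numbers and define F : ℝ → ℝ by F(s) = a·(σ(s)·s − ln(1+e^s)) − b·σ(s), where σ(s) = e^s/(1+e^s). Then F is strictly decreasing on (−∞, b/a], strictly increasing on [b/a, ∞), and F attains its global minimum uniquely at s = b/a; in particular F(s) ≥ F(b/a) for all s ∈ ℝ, with equality if and only if s = b/a. -/
/-!
Since `σ' = σ (1 - σ)` and `(ln (1 + eˢ))' = σ`, the derivative of `F` collapses to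
`(a s - b) σ(s) (1 - σ(s))`, whose sign is that of `s - b / a`.
-/

open Real Set

lemma Real.exp_div_one_add_exp (s : ℝ) : exp s / (1 + exp s) = sigmoid s := by
  rw [sigmoid_def, exp_neg]
  field_simp
  ring

lemma Real.hasDerivAt_log_one_add_exp (s : ℝ) :
    HasDerivAt (fun t ↦ log (1 + exp t)) (sigmoid s) s := by
  simpa [exp_div_one_add_exp] using ((hasDerivAt_exp s).const_add 1).log (by positivity)

lemma hasDerivAt_cSP_integrand (a b s : ℝ) :
    HasDerivAt (fun t ↦ a * (sigmoid t * t - log (1 + exp t)) - b * sigmoid t)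
      ((a * s - b) * (sigmoid s * (1 - sigmoid s))) s := by
  have h := ((((hasDerivAt_sigmoid s).mul (hasDerivAt_id' s)).sub
    (hasDerivAt_log_one_add_exp s)).const_mul a).sub ((hasDerivAt_sigmoid s).const_mul b)
  exact h.congr_deriv (by ring)

section SignChange

variable {f f' : ℝ → ℝ} {c : ℝ}

lemma strictAntiOn_Iic_of_hasDerivAt_neg (hf : ∀ x, HasDerivAt f (f' x) x)
    (hf' : ∀ x < c, f' x < 0) : StrictAntiOn f (Iic c) :=
  strictAntiOn_of_hasDerivWithinAt_neg (convex_Iic c)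
    (fun x _ ↦ (hf x).continuousAt.continuousWithinAt)
    (fun x _ ↦ (hf x).hasDerivWithinAt)
    (fun x hx ↦ hf' x (by rwa [interior_Iic] at hx))

lemma strictMonoOn_Ici_of_hasDerivAt_pos (hf : ∀ x, HasDerivAt f (f' x) x)
    (hf' : ∀ x, c < x → 0 < f' x) : StrictMonoOn f (Ici c) :=
  strictMonoOn_of_hasDerivWithinAt_pos (convex_Ici c)
    (fun x _ ↦ (hf x).continuousAt.continuousWithinAt)
    (fun x _ ↦ (hf x).hasDerivWithinAt)
    (fun x hx ↦ hf' x (by rwa [interior_Ici] at hx))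

lemma lt_of_strictAntiOn_Iic_of_strictMonoOn_Ici (hanti : StrictAntiOn f (Iic c))
    (hmono : StrictMonoOn f (Ici c)) {s : ℝ} (hs : s ≠ c) : f c < f s := by
  rcases hs.lt_or_gt with hlt | hgt
  · exact hanti hlt.le self_mem_Iic hlt
  · exact hmono self_mem_Ici hgt.le hgt

end SignChange

theorem cSP_integrand_unique_min_general
    (a b : ℝ) (ha : 0 < a)
    (F : ℝ → ℝ)
    (hF : ∀ s, F s = a * ((Real.exp s / (1 + Real.exp s)) * s
        - Real.log (1 + Real.exp s)) - b * (Real.exp s / (1 + Real.exp s))) :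
    StrictAntiOn F (Set.Iic (b / a)) ∧
    StrictMonoOn F (Set.Ici (b / a)) ∧
    (∀ s, F (b / a) ≤ F s) ∧
    (∀ s, F s = F (b / a) ↔ s = b / a) := by
  have hF' : F = fun t ↦ a * (sigmoid t * t - log (1 + exp t)) - b * sigmoid t := by
    funext t
    simp only [hF, exp_div_one_add_exp]
  have hderiv := hasDerivAt_cSP_integrand a b
  rw [← hF'] at hderiv
  have hσ' (s : ℝ) : 0 < sigmoid s * (1 - sigmoid s) :=
    mul_pos (sigmoid_pos s) (sub_pos.mpr (sigmoid_lt_one s))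
  have hanti : StrictAntiOn F (Iic (b / a)) :=
    strictAntiOn_Iic_of_hasDerivAt_neg hderiv fun s hs ↦
      mul_neg_of_neg_of_pos (by linarith [(lt_div_iff₀' ha).mp hs]) (hσ' s)
  have hmono : StrictMonoOn F (Ici (b / a)) :=
    strictMonoOn_Ici_of_hasDerivAt_pos hderiv fun s hs ↦
      mul_pos (by linarith [(div_lt_iff₀' ha).mp hs]) (hσ' s)
  have hlt (s : ℝ) (hs : s ≠ b / a) : F (b / a) < F s :=
    lt_of_strictAntiOn_Iic_of_strictMonoOn_Ici hanti hmono hs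
  refine ⟨hanti, hmono, fun s ↦ ?_, fun s ↦ ⟨fun h ↦ ?_, fun h ↦ h ▸ rfl⟩⟩
  · rcases eq_or_ne s (b / a) with rfl | hs
    exacts [le_rfl, (hlt s hs).le]
  · by_contra hs
    exact (hlt s hs).ne' h

/-- Pointwise analysis of the cSP loss integrand: for `a > 0` and `b ≥ 0`, the
function `F(s) = a·(σ(s)·s − ln(1+eˢ)) − b·σ(s)` with `σ(s) = eˢ/(1+eˢ)` is
strictly decreasing on `(−∞, b/a]`, strictly increasing on `[b/a, ∞)`, and attains
its global minimum uniquely at `s = b/a`. -/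
theorem cSP_integrand_unique_min
    (a b : ℝ) (ha : 0 < a) (hb : 0 ≤ b)
    (F : ℝ → ℝ)
    (hF : ∀ s, F s = a * ((Real.exp s / (1 + Real.exp s)) * s
        - Real.log (1 + Real.exp s)) - b * (Real.exp s / (1 + Real.exp s))) :
    StrictAntiOn F (Set.Iic (b / a)) ∧
    StrictMonoOn F (Set.Ici (b / a)) ∧
    (∀ s, F (b / a) ≤ F s) ∧
    (∀ s, F s = F (b / a) ↔ s = b / a) :=
  cSP_integrand_unique_min_general a b ha F hF
end

section
/- Let Z be a measurable space, let Q_g be a finite measure on Z, let ψ* : Z → [0,∞) be measurable, and set Q_r = Q_g.withDensity ψ* (so ψ* is a density of Q_r with respect to Q_g); assume Q_r is a finite measure. Then for every measurable function ψ : Z → ℝ, the population cSP loss satisfies L_c(ψ) ≥ L_c(ψ*), i.e., the true density ratio ψ* is a global minimizer of L_c over all measurable real-valued functions on Z. -/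
open MeasureTheory Real

/-!
Writing `Q_r = ψ* • Q_g`, the loss becomes `L_c(ψ) = ∫ (σ(ψ) ψ - η(ψ) - ψ* σ(ψ)) dQ_g`, so it
suffices to minimise the integrand pointwise. With `r = ψ*(z)`, its excess at `ψ(z) = t` over its
value at `t = r` is `η(r) - η(t) - σ(t) (r - t) ≥ 0`: the tangent-line inequality for the convex
function `η`, whose derivative is `σ`.
-/

/-- The sigmoid function. -/
noncomputable def sigmoid (t : ℝ) : ℝ := Real.exp t / (1 + Real.exp t)

/-- The softplus function. -/
noncomputable def softplus (t : ℝ) : ℝ := Real.log (1 + Real.exp t)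

/-- The population cSP loss of `ψ` with respect to a fake measure `Qg` and a
real measure `Qr`. -/
noncomputable def cSPLoss {Z : Type*} [MeasurableSpace Z]
    (Qg Qr : Measure Z) (ψ : Z → ℝ) : ℝ :=
  ∫ z, (_root_.sigmoid (ψ z) * ψ z - softplus (ψ z)) ∂Qg - ∫ z, _root_.sigmoid (ψ z) ∂Qr

lemma sigmoid_eq_real_sigmoid (t : ℝ) : _root_.sigmoid t = Real.sigmoid t := by
  rw [_root_.sigmoid, Real.sigmoid_def, exp_neg]
  field_simp
  ring

lemma sigmoid_mem_Icc (t : ℝ) : _root_.sigmoid t ∈ Set.Icc 0 1 := by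
  rw [sigmoid_eq_real_sigmoid]
  exact ⟨Real.sigmoid_nonneg t, Real.sigmoid_le_one t⟩

lemma measurable_sigmoid : Measurable _root_.sigmoid := by
  unfold _root_.sigmoid
  fun_prop

lemma measurable_softplus : Measurable softplus := by
  unfold softplus
  fun_prop

lemma softplus_sub_softplus_le (r t : ℝ) :
    softplus t - softplus r ≤ _root_.sigmoid t * (t - r) := by
  set s := _root_.sigmoid t with hs
  obtain ⟨hs0, hs1⟩ := sigmoid_mem_Icc t
  -- `(1 + eʳ) / (1 + eᵗ)` is the `s`-weighted mean of `e^(r - t)` and `1`, so Jensen for `exp` applies.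
  have hratio : s * exp (r - t) + (1 - s) = (1 + exp r) / (1 + exp t) := by
    rw [hs, _root_.sigmoid, exp_sub]
    field_simp
    ring
  have hjensen : exp (s * (r - t)) ≤ (1 + exp r) / (1 + exp t) := by
    rw [← hratio]
    simpa only [smul_eq_mul, mul_zero, add_zero, exp_zero, mul_one] using
      convexOn_exp.2 (Set.mem_univ (r - t)) (Set.mem_univ 0) hs0 (sub_nonneg.2 hs1)
        (add_sub_cancel s 1)
  have hlog := (le_log_iff_exp_le (by positivity)).2 hjensen
  rw [log_div (by positivity) (by positivity)] at hlog
  rw [softplus, softplus]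
  linarith

lemma abs_sigmoid_mul_sub_softplus_le (t : ℝ) :
    |_root_.sigmoid t * t - softplus t| ≤ log 2 := by
  obtain ⟨hs0, hs1⟩ := sigmoid_mem_Icc t
  have hnonneg : 0 ≤ softplus t := log_nonneg (by linarith [exp_pos t])
  have hge : t ≤ softplus t := (le_log_iff_exp_le (by positivity)).2 (by linarith)
  have htangent := softplus_sub_softplus_le 0 t
  rw [show softplus 0 = log 2 by norm_num [softplus]] at htangent
  rw [abs_le]
  constructor
  · linarith
  · nlinarith [log_nonneg one_le_two]

/-- The integrand of `cSPLoss Qg Qr` against `Qg` at a point where `dQr/dQg = r` and `ψ = t`. -/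
noncomputable def cSPIntegrand (r t : ℝ) : ℝ :=
  _root_.sigmoid t * t - softplus t - r * _root_.sigmoid t

lemma cSPIntegrand_self_le (r t : ℝ) : cSPIntegrand r r ≤ cSPIntegrand r t := by
  have := softplus_sub_softplus_le r t
  simp only [cSPIntegrand]
  nlinarith

section withDensity

variable {Z : Type*} [MeasurableSpace Z] {μ : Measure Z} {f : Z → ℝ}

lemma integral_withDensity_ofReal (hf : Measurable f) (hf0 : ∀ z, 0 ≤ f z) (g : Z → ℝ) :
    ∫ z, g z ∂μ.withDensity (fun z => ENNReal.ofReal (f z)) = ∫ z, f z * g z ∂μ := by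
  rw [integral_withDensity_eq_integral_toReal_smul hf.ennreal_ofReal
    (ae_of_all _ fun _ => ENNReal.ofReal_lt_top)]
  simp only [ENNReal.toReal_ofReal (hf0 _), smul_eq_mul]

lemma integrable_of_isFiniteMeasure_withDensity_ofReal (hf : Measurable f) (hf0 : ∀ z, 0 ≤ f z)
    [IsFiniteMeasure (μ.withDensity fun z => ENNReal.ofReal (f z))] : Integrable f μ := by
  refine (lintegral_ofReal_ne_top_iff_integrable hf.aestronglyMeasurable (ae_of_all _ hf0)).1 ?_
  simpa [withDensity_apply _ MeasurableSet.univ] using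
    measure_ne_top (μ.withDensity fun z => ENNReal.ofReal (f z)) Set.univ

variable {ψ : Z → ℝ}

lemma integrable_sigmoid_mul_sub_softplus [IsFiniteMeasure μ] (hψ : Measurable ψ) :
    Integrable (fun z => _root_.sigmoid (ψ z) * ψ z - softplus (ψ z)) μ :=
  .of_bound (((measurable_sigmoid.comp hψ).mul hψ).sub
    (measurable_softplus.comp hψ)).aestronglyMeasurable
    (log 2) (ae_of_all _ fun z => abs_sigmoid_mul_sub_softplus_le (ψ z))

lemma MeasureTheory.Integrable.mul_sigmoid (hf : Integrable f μ) (hψ : Measurable ψ) :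
    Integrable (fun z => f z * _root_.sigmoid (ψ z)) μ := by
  refine hf.mul_bdd (measurable_sigmoid.comp hψ).aestronglyMeasurable (c := 1)
    (ae_of_all _ fun z => ?_)
  obtain ⟨hs0, hs1⟩ := sigmoid_mem_Icc (ψ z)
  rwa [norm_eq_abs, abs_of_nonneg hs0]

lemma integrable_cSPIntegrand [IsFiniteMeasure μ] (hf : Integrable f μ) (hψ : Measurable ψ) :
    Integrable (fun z => cSPIntegrand (f z) (ψ z)) μ :=
  (integrable_sigmoid_mul_sub_softplus hψ).sub (hf.mul_sigmoid hψ)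

lemma cSPLoss_withDensity_ofReal [IsFiniteMeasure μ]
    [IsFiniteMeasure (μ.withDensity fun z => ENNReal.ofReal (f z))]
    (hf : Measurable f) (hf0 : ∀ z, 0 ≤ f z) (hψ : Measurable ψ) :
    cSPLoss μ (μ.withDensity fun z => ENNReal.ofReal (f z)) ψ =
      ∫ z, cSPIntegrand (f z) (ψ z) ∂μ := by
  have hfi := integrable_of_isFiniteMeasure_withDensity_ofReal (μ := μ) hf hf0
  rw [cSPLoss, integral_withDensity_ofReal hf hf0,
    ← integral_sub (integrable_sigmoid_mul_sub_softplus hψ) (hfi.mul_sigmoid hψ)]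
  rfl

end withDensity

/-- The true density ratio `ψ*` of `Qr` with respect to `Qg` is a global
minimizer of the population cSP loss over all measurable real-valued
functions. -/
theorem cSPLoss_global_min_at_density
    {Z : Type*} [MeasurableSpace Z]
    (Qg : Measure Z) [IsFiniteMeasure Qg]
    (ψstar : Z → ℝ) (hψstar_meas : Measurable ψstar)
    (hψstar_nonneg : ∀ z, 0 ≤ ψstar z)
    (Qr : Measure Z)
    (hQr : Qr = Qg.withDensity (fun z => ENNReal.ofReal (ψstar z)))
    [IsFiniteMeasure Qr]
    (ψ : Z → ℝ) (hψ : Measurable ψ) :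
    cSPLoss Qg Qr ψstar ≤ cSPLoss Qg Qr ψ := by
  subst hQr
  have hψstar_int :=
    integrable_of_isFiniteMeasure_withDensity_ofReal (μ := Qg) hψstar_meas hψstar_nonneg
  rw [cSPLoss_withDensity_ofReal hψstar_meas hψstar_nonneg hψstar_meas,
    cSPLoss_withDensity_ofReal hψstar_meas hψstar_nonneg hψ]
  exact integral_mono (integrable_cSPIntegrand hψstar_int hψstar_meas)
    (integrable_cSPIntegrand hψstar_int hψ) fun z => cSPIntegrand_self_le _ _
end
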